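/- arXiv:2411.14434 — 7 statements merged into one kernel-verified Lean document; each statement's English description precedes it below -/
import Mathlib

section
/- For every natural number n, the finite product ∏_{i=1}^{n} (1 + 4^{−i}) is strictly less than e^{1/3}, and e^{1/3} < 2. -/
lemma cordic_sum_bound (n : ℕ) :
    (∑ i ∈ Finset.Icc 1 n, (4 : ℝ) ^ (-(i : ℤ))) ≤ (1 - (4 : ℝ) ^ (-(n : ℤ))) / 3 := by
  induction n with
  | zero => simp
  | succ n ih =>
    rw [Finset.sum_Icc_succ_top (by omega : 1 ≤ n + 1)]
    have h4 : ((4 : ℝ) ^ (-(n : ℤ)) : ℝ) = 4 * (4 : ℝ) ^ (-((n : ℕ) + 1 : ℤ)) := by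
      rw [show (-((n : ℕ) + 1 : ℤ)) = -(n : ℤ) - 1 by ring, zpow_sub₀ (by norm_num)]
      ring
    push_cast
    push_cast at ih
    nlinarith [ih]

theorem cordic_stretch_bound (n : ℕ) :
    (∏ i ∈ Finset.Icc 1 n, (1 + (4 : ℝ) ^ (-(i : ℤ)))) < Real.exp (1 / 3) ∧
    Real.exp (1 / 3) < 2 := by
  constructor
  · have h1 : (∏ i ∈ Finset.Icc 1 n, (1 + (4 : ℝ) ^ (-(i : ℤ)))) ≤
        ∏ i ∈ Finset.Icc 1 n, Real.exp ((4 : ℝ) ^ (-(i : ℤ))) := by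
      apply Finset.prod_le_prod
      · intro i _
        positivity
      · intro i _
        have := Real.add_one_le_exp ((4 : ℝ) ^ (-(i : ℤ)))
        linarith
    rw [← Real.exp_sum] at h1
    refine lt_of_le_of_lt h1 (Real.exp_lt_exp.2 ?_)
    have := cordic_sum_bound n
    have hp : (0 : ℝ) < (4 : ℝ) ^ (-(n : ℤ)) := by positivity
    linarith
  · have h3 : Real.exp (1 / 3) ^ 3 = Real.exp 1 := by
      rw [← Real.exp_nat_mul]; norm_num
    have he := Real.exp_one_lt_d9
    by_contra h
    push_neg at h
    have h8 : (2:ℝ)^3 ≤ Real.exp (1/3) ^ 3 := pow_le_pow_left₀ (by norm_num) h 3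
    rw [h3] at h8
    norm_num at h8
    linarith
end

section
/- Let r and z be real numbers, and let F : ℕ → ℕ be the Fibonacci sequence with F(0) = F(1) = 1 and F(k+2) = F(k+1) + F(k). Define sequences a, b : ℕ → ℝ by a(0) = b(0) = z, and for each i: if i is even then b(i+1) = b(i) + r^{F(i)}·a(i) and a(i+1) = a(i), while if i is odd then a(i+1) = a(i) + r^{F(i)}·b(i) and b(i+1) = b(i). Then for every even natural number i, a(i) = z·∑_{k=0}^{F(i+1)−1} r^k and b(i) = z·∑_{k=0}^{F(i)−1} r^k. -/
lemma gs_add (r : ℝ) (m n : ℕ) :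
    ∑ k ∈ Finset.range (m + n), r ^ k
      = (∑ k ∈ Finset.range m, r ^ k) + r ^ m * ∑ k ∈ Finset.range n, r ^ k := by
  rw [Finset.sum_range_add, Finset.mul_sum]
  simp [pow_add]

theorem div_loop_invariant (r z : ℝ) (F : ℕ → ℕ) (a b : ℕ → ℝ)
    (hF0 : F 0 = 1) (hF1 : F 1 = 1)
    (hF : ∀ k, F (k + 2) = F (k + 1) + F k)
    (ha0 : a 0 = z) (hb0 : b 0 = z)
    (hstep : ∀ i, (Even i → b (i + 1) = b i + r ^ F i * a i ∧ a (i + 1) = a i) ∧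
      (Odd i → a (i + 1) = a i + r ^ F i * b i ∧ b (i + 1) = b i)) :
    ∀ i, Even i →
      a i = z * ∑ k ∈ Finset.range (F (i + 1)), r ^ k ∧
      b i = z * ∑ k ∈ Finset.range (F i), r ^ k := by
  have key : ∀ n : ℕ,
      a (2 * n) = z * ∑ k ∈ Finset.range (F (2 * n + 1)), r ^ k ∧
      b (2 * n) = z * ∑ k ∈ Finset.range (F (2 * n)), r ^ k := by
    intro n
    induction n with
    | zero => simp [ha0, hb0, hF0, hF1]
    | succ n ih =>
      obtain ⟨ha, hb⟩ := ih
      set i := 2 * n with hi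
      have hev : Even i := ⟨n, by omega⟩
      have hod : Odd (i + 1) := ⟨n, by omega⟩
      obtain ⟨hb1, ha1⟩ := (hstep i).1 hev
      obtain ⟨ha2, hb2⟩ := (hstep (i + 1)).2 hod
      simp only [show i + 1 + 1 = i + 2 from rfl] at ha2 hb2
      have h2 : 2 * (n + 1) = i + 2 := by omega
      have hbv : b (i + 1) = z * ∑ k ∈ Finset.range (F (i + 2)), r ^ k := by
        rw [hb1, hb, ha, hF i, Nat.add_comm (F (i + 1)) (F i), gs_add]; ring
      constructor
      · rw [h2, ha2, ha1, ha, hbv, hF (i + 1), Nat.add_comm (F (i + 2)) (F (i + 1)), gs_add]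
        ring
      · rw [h2, hb2, hbv]
  intro i hi
  obtain ⟨n, hn⟩ := hi
  have : i = 2 * n := by omega
  subst this
  exact key n
end

section
/- Let F : ℕ → ℕ be the Fibonacci sequence with F(0) = F(1) = 1 and F(k+2) = F(k+1) + F(k), let φ = (1 + √5)/2 be the golden ratio, let m ≥ 1 and J ≥ 2 be natural numbers, let r = −2^{−m}, and let z be a real number with |z| ≤ 2. Then |z·∑_{k=0}^{F(J)−1} r^k − z·∑_{k=0}^{F(J+1)−1} r^k| ≤ 2^{−φ^{J−1}·m + 2}. -/
/-!
The partial sums of the alternating geometric series with ratio `r ∈ [-1, 0]` stay in `[0, 1]`,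
so two partial sums of lengths `N ≤ M` differ by at most `|r| ^ N`. Here `N = F J = fib (J + 1)`,
and the identity `fib (n + 1) - ψ fib n = φ ^ n` with `-1 < ψ < 0` gives
`φ ^ n ≤ fib (n + 2)`, so `|r| ^ N = 2 ^ (-N m) ≤ 2 ^ (-φ ^ (J - 1) m)`.
-/

open Finset Real

theorem eq_fib_succ_of_rec {F : ℕ → ℕ} (hF0 : F 0 = 1) (hF1 : F 1 = 1)
    (hF : ∀ k, F (k + 2) = F (k + 1) + F k) : ∀ n, F n = Nat.fib (n + 1)
  | 0 => hF0
  | 1 => hF1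
  | n + 2 => by
    rw [hF, eq_fib_succ_of_rec hF0 hF1 hF (n + 1), eq_fib_succ_of_rec hF0 hF1 hF n,
      Nat.fib_add_two (n := n + 1)]
    ring

theorem Real.goldenRatio_pow_le_fib_add_two (n : ℕ) : goldenRatio ^ n ≤ Nat.fib (n + 2) := by
  rw [← fib_succ_sub_goldenConj_mul_fib, Nat.fib_add_two, Nat.cast_add]
  nlinarith [neg_one_lt_goldenConj, (Nat.fib n).cast_nonneg (α := ℝ)]

section AlternatingGeomSum

variable {α : Type*} [CommRing α] [LinearOrder α] [IsStrictOrderedRing α] {r : α}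

theorem geom_sum_mem_Icc_of_mem_Icc (hr : r ∈ Set.Icc (-1) 0) (n : ℕ) :
    ∑ k ∈ range n, r ^ k ∈ Set.Icc 0 1 := by
  induction n with
  | zero => simp
  | succ n ih =>
    obtain ⟨hr₁, hr₀⟩ := hr
    obtain ⟨hs₀, hs₁⟩ := ih
    have hprod_le : r * ∑ k ∈ range n, r ^ k ≤ 0 := mul_nonpos_of_nonpos_of_nonneg hr₀ hs₀
    have hprod_ge : r * 1 ≤ r * ∑ k ∈ range n, r ^ k := mul_le_mul_of_nonpos_left hs₁ hr₀
    rw [geom_sum_succ]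
    constructor <;> linarith

theorem abs_geom_sum_sub_geom_sum_le (hr : r ∈ Set.Icc (-1) 0) {N M : ℕ} (hNM : N ≤ M) :
    |∑ k ∈ range N, r ^ k - ∑ k ∈ range M, r ^ k| ≤ |r| ^ N := by
  obtain ⟨d, rfl⟩ := Nat.exists_eq_add_of_le hNM
  obtain ⟨hs₀, hs₁⟩ := geom_sum_mem_Icc_of_mem_Icc hr d
  simp only [sum_range_add, pow_add, ← mul_sum, sub_add_cancel_left, abs_neg, abs_mul, abs_pow]
  exact mul_le_of_le_one_right (by positivity) (abs_le.2 ⟨by linarith, hs₁⟩)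

end AlternatingGeomSum

theorem zpow_neg_natCast_pow_eq_rpow (b : ℝ) (m N : ℕ) :
    (b ^ (-(m : ℤ))) ^ N = b ^ (-((N : ℝ) * m)) := by
  rw [← zpow_natCast, ← zpow_mul, ← rpow_intCast]
  push_cast
  ring_nf

theorem div_aux_error_bound_general (F : ℕ → ℕ)
    (hF0 : F 0 = 1) (hF1 : F 1 = 1)
    (hF : ∀ k, F (k + 2) = F (k + 1) + F k)
    (φ : ℝ) (hφ : φ = (1 + Real.sqrt 5) / 2)
    (m J : ℕ) (hJ : 2 ≤ J)
    (r : ℝ) (hr : r = -(2 : ℝ) ^ (-(m : ℤ)))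
    (z : ℝ) (hz : |z| ≤ 2) :
    |z * ∑ k ∈ Finset.range (F J), r ^ k - z * ∑ k ∈ Finset.range (F (J + 1)), r ^ k| ≤
      (2 : ℝ) ^ (-(φ ^ (J - 1)) * (m : ℝ) + 2) := by
  have hFfib := eq_fib_succ_of_rec hF0 hF1 hF
  have hNM : F J ≤ F (J + 1) := by
    rw [hFfib, hFfib]
    exact Nat.fib_mono (by omega)
  have hφN : φ ^ (J - 1) ≤ F J := by
    rw [hφ, ← goldenRatio, hFfib, show J + 1 = J - 1 + 2 by omega]
    exact goldenRatio_pow_le_fib_add_two _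
  have hr_mem : r ∈ Set.Icc (-1) 0 := by
    rw [hr]
    exact ⟨neg_le_neg (zpow_le_one_of_nonpos₀ one_le_two (by simp)),
      neg_nonpos.2 (by positivity)⟩
  have habs_r : |r| = (2 : ℝ) ^ (-(m : ℤ)) := by rw [hr, abs_neg, abs_of_pos (by positivity)]
  calc |z * ∑ k ∈ range (F J), r ^ k - z * ∑ k ∈ range (F (J + 1)), r ^ k|
      = |z| * |∑ k ∈ range (F J), r ^ k - ∑ k ∈ range (F (J + 1)), r ^ k| := by
        rw [← mul_sub, abs_mul]
    _ ≤ 2 * |r| ^ F J := by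
        gcongr
        exact abs_geom_sum_sub_geom_sum_le hr_mem hNM
    _ = (2 : ℝ) ^ (-((F J : ℝ) * m) + 1) := by
        rw [habs_r, zpow_neg_natCast_pow_eq_rpow, rpow_add two_pos, rpow_one, mul_comm]
    _ ≤ (2 : ℝ) ^ (-(φ ^ (J - 1)) * (m : ℝ) + 2) := by
        apply rpow_le_rpow_of_exponent_le one_le_two
        nlinarith [(m.cast_nonneg : (0 : ℝ) ≤ m)]

theorem div_aux_error_bound (F : ℕ → ℕ)
    (hF0 : F 0 = 1) (hF1 : F 1 = 1)
    (hF : ∀ k, F (k + 2) = F (k + 1) + F k)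
    (φ : ℝ) (hφ : φ = (1 + Real.sqrt 5) / 2)
    (m J : ℕ) (hm : 1 ≤ m) (hJ : 2 ≤ J)
    (r : ℝ) (hr : r = -(2 : ℝ) ^ (-(m : ℤ)))
    (z : ℝ) (hz : |z| ≤ 2) :
    |z * ∑ k ∈ Finset.range (F J), r ^ k - z * ∑ k ∈ Finset.range (F (J + 1)), r ^ k| ≤
      (2 : ℝ) ^ (-(φ ^ (J - 1)) * (m : ℝ) + 2) :=
  div_aux_error_bound_general F hF0 hF1 hF φ hφ m J hJ r hr z hz
end

section
/- Let F : ℕ → ℕ be the Fibonacci sequence with F(0) = F(1) = 1 and F(k+2) = F(k+1) + F(k), let m ≥ 1 and J be natural numbers, let r = −2^{−m}, and let z be a real number with |z| ≤ 2. Then |z·∑_{k=0}^{F(J+1)−1} r^k − z/(1 + 2^{−m})| ≤ 2·2^{−m·F(J+1)}. -/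
open Finset

theorem geom_sum_sub_inv_one_sub {K : Type*} [Field K] {r : K} (hr : r ≠ 1) (n : ℕ) :
    ∑ i ∈ range n, r ^ i - (1 - r)⁻¹ = -r ^ n / (1 - r) := by
  have hr' : 1 - r ≠ 0 := sub_ne_zero.mpr hr.symm
  rw [geom_sum_eq hr, ← neg_sub r 1, div_neg]
  field_simp
  ring

theorem abs_geom_sum_sub_inv_one_sub_le {r : ℝ} (hr : r ≤ 0) (n : ℕ) :
    |∑ i ∈ range n, r ^ i - (1 - r)⁻¹| ≤ |r| ^ n := by
  have h1r : 1 ≤ 1 - r := by linarith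
  rw [geom_sum_sub_inv_one_sub (by linarith) n, abs_div, abs_neg, abs_pow,
    abs_of_pos (by linarith : (0 : ℝ) < 1 - r)]
  exact div_le_self (by positivity) h1r

theorem div_in_error_bound_general (F : ℕ → ℕ)
    (m J : ℕ)
    (r : ℝ) (hr : r = -(2 : ℝ) ^ (-(m : ℤ)))
    (z : ℝ) (hz : |z| ≤ 2) :
    |z * ∑ k ∈ Finset.range (F (J + 1)), r ^ k - z / (1 + (2 : ℝ) ^ (-(m : ℤ)))| ≤
      2 * (2 : ℝ) ^ (-((m * F (J + 1) : ℕ) : ℤ)) := by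
  have hr_abs : |r| = (2 : ℝ) ^ (-(m : ℤ)) := by rw [hr, abs_neg, abs_of_pos (by positivity)]
  have hr_nonpos : r ≤ 0 := by rw [hr, neg_nonpos]; positivity
  have hr_pow : |r| ^ F (J + 1) = (2 : ℝ) ^ (-((m * F (J + 1) : ℕ) : ℤ)) := by
    rw [hr_abs, ← zpow_natCast, ← zpow_mul]
    push_cast
    ring_nf
  have h1r : 1 + (2 : ℝ) ^ (-(m : ℤ)) = 1 - r := by rw [hr, sub_neg_eq_add]
  calc |z * ∑ k ∈ range (F (J + 1)), r ^ k - z / (1 + (2 : ℝ) ^ (-(m : ℤ)))|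
      = |z| * |∑ k ∈ range (F (J + 1)), r ^ k - (1 - r)⁻¹| := by
        rw [h1r, div_eq_mul_inv, ← mul_sub, abs_mul]
    _ ≤ 2 * |r| ^ F (J + 1) :=
        mul_le_mul hz (abs_geom_sum_sub_inv_one_sub_le hr_nonpos _) (abs_nonneg _) zero_le_two
    _ = 2 * (2 : ℝ) ^ (-((m * F (J + 1) : ℕ) : ℤ)) := by rw [hr_pow]

theorem div_in_error_bound (F : ℕ → ℕ)
    (hF0 : F 0 = 1) (hF1 : F 1 = 1)
    (hF : ∀ k, F (k + 2) = F (k + 1) + F k)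
    (m J : ℕ) (hm : 1 ≤ m)
    (r : ℝ) (hr : r = -(2 : ℝ) ^ (-(m : ℤ)))
    (z : ℝ) (hz : |z| ≤ 2) :
    |z * ∑ k ∈ Finset.range (F (J + 1)), r ^ k - z / (1 + (2 : ℝ) ^ (-(m : ℤ)))| ≤
      2 * (2 : ℝ) ^ (-((m * F (J + 1) : ℕ) : ℤ)) :=
  div_in_error_bound_general F m J r hr z hz
end

section
/- For all natural numbers i and n with i ≤ n, arctan(2^{−i}) ≤ ∑_{j=i+1}^{n} arctan(2^{−j}) + arctan(2^{−n}). -/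
lemma arctan_le_two_arctan_half {x : ℝ} (hx : 0 ≤ x) (hx1 : x ≤ 1) :
    Real.arctan x ≤ 2 * Real.arctan (x / 2) := by
  have h1 : (x / 2) * (x / 2) < 1 := by nlinarith
  have h2 : Real.arctan (x / 2) + Real.arctan (x / 2) =
      Real.arctan ((x / 2 + x / 2) / (1 - (x / 2) * (x / 2))) := Real.arctan_add h1
  have h3 : x ≤ (x / 2 + x / 2) / (1 - (x / 2) * (x / 2)) := by
    rw [le_div_iff₀ (by nlinarith)]
    nlinarith
  calc Real.arctan x ≤ Real.arctan ((x / 2 + x / 2) / (1 - (x / 2) * (x / 2))) :=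
        Real.arctan_strictMono.monotone h3
    _ = 2 * Real.arctan (x / 2) := by rw [← h2]; ring

theorem cordic_convergence_condition (i n : ℕ) (h : i ≤ n) :
    Real.arctan ((2 : ℝ) ^ (-(i : ℤ))) ≤
      (∑ j ∈ Finset.Icc (i + 1) n, Real.arctan ((2 : ℝ) ^ (-(j : ℤ)))) +
        Real.arctan ((2 : ℝ) ^ (-(n : ℤ))) := by
  induction n, h using Nat.le_induction with
  | base => simp
  | succ n hn ih =>
      rw [Finset.sum_Icc_succ_top (by omega)]
      have key : Real.arctan ((2 : ℝ) ^ (-(n : ℤ))) ≤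
          2 * Real.arctan ((2 : ℝ) ^ (-((n + 1 : ℕ) : ℤ))) := by
        have : (2 : ℝ) ^ (-((n + 1 : ℕ) : ℤ)) = (2 : ℝ) ^ (-(n : ℤ)) / 2 := by
          push_cast
          rw [neg_add, zpow_add₀ (by norm_num : (2:ℝ) ≠ 0)]
          norm_num
          ring
        rw [this]
        exact arctan_le_two_arctan_half (by positivity) (by
          calc (2:ℝ) ^ (-(n:ℤ)) ≤ (2:ℝ) ^ (0:ℤ) :=
            zpow_le_zpow_right₀ (by norm_num) (by omega)
          _ = 1 := by norm_num)
      linarith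
end

section
/- Let n be a natural number and θ a real number with |θ| ≤ ∑_{j=0}^{n} arctan(2^{−j}). Then there exists a sequence of signs ε_0, ..., ε_n, each equal to 1 or −1, such that |θ − ∑_{j=0}^{n} ε_j · arctan(2^{−j})| ≤ arctan(2^{−n}). -/
noncomputable def aAng (j : ℕ) : ℝ := Real.arctan ((2 : ℝ) ^ (-(j : ℤ)))

lemma aAng_pos (j : ℕ) : 0 < aAng j := by
  unfold aAng
  rw [← Real.arctan_zero]
  exact Real.arctan_strictMono (by positivity)

lemma arctan_two_mul_le {x : ℝ} (hx : 0 ≤ x) (hx1 : x < 1) :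
    Real.arctan (2 * x) ≤ 2 * Real.arctan x := by
  have h1 : Real.arctan x < Real.pi / 4 := by
    rw [← Real.arctan_one]; exact Real.arctan_strictMono hx1
  have h0 : 0 ≤ Real.arctan x := by
    rw [← Real.arctan_zero]; exact Real.arctan_strictMono.monotone hx
  have hb1 : -(Real.pi / 2) < 2 * Real.arctan x := by
    nlinarith [Real.pi_pos]
  have hb2 : 2 * Real.arctan x < Real.pi / 2 := by nlinarith
  have htan : Real.tan (2 * Real.arctan x) = 2 * x / (1 - x ^ 2) := by
    rw [Real.tan_two_mul, Real.tan_arctan]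
  have hx2 : 0 < 1 - x ^ 2 := by nlinarith
  have hle : 2 * x ≤ 2 * x / (1 - x ^ 2) := by
    rw [le_div_iff₀ hx2]; nlinarith
  calc Real.arctan (2 * x) ≤ Real.arctan (2 * x / (1 - x ^ 2)) :=
        Real.arctan_strictMono.monotone hle
    _ = 2 * Real.arctan x := by rw [← htan, Real.arctan_tan hb1 hb2]

lemma aAng_double (j : ℕ) : aAng j ≤ 2 * aAng (j + 1) := by
  have h : ((2 : ℝ) ^ (-(j : ℤ))) = 2 * (2 : ℝ) ^ (-((j + 1 : ℕ) : ℤ)) := by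
    have he : (-(j : ℤ)) = 1 + (-((j + 1 : ℕ) : ℤ)) := by push_cast; ring
    rw [he, zpow_add₀ (two_ne_zero : (2:ℝ) ≠ 0), zpow_one]
  have hx : (0 : ℝ) ≤ (2 : ℝ) ^ (-((j + 1 : ℕ) : ℤ)) := by positivity
  have hx1 : (2 : ℝ) ^ (-((j + 1 : ℕ) : ℤ)) < 1 := by
    apply zpow_lt_one_of_neg₀ one_lt_two
    omega
  unfold aAng
  rw [h]
  exact arctan_two_mul_le hx hx1

lemma aAng_key : ∀ d k, aAng k ≤ aAng (k + d) + ∑ j ∈ Finset.Ico (k + 1) (k + d + 1), aAng j := by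
  intro d
  induction d with
  | zero => intro k; simp
  | succ d ih =>
    intro k
    have h1 := aAng_double k
    have h2 := ih (k + 1)
    have hsplit : ∑ j ∈ Finset.Ico (k + 1) (k + (d + 1) + 1), aAng j
        = aAng (k + 1) + ∑ j ∈ Finset.Ico (k + 1 + 1) (k + 1 + d + 1), aAng j := by
      rw [show k + (d + 1) + 1 = k + 1 + d + 1 by ring]
      exact Finset.sum_eq_sum_Ico_succ_bot (by omega) _
    rw [hsplit, show k + (d + 1) = k + 1 + d by ring]
    linarith

noncomputable def resid (θ : ℝ) : ℕ → ℝ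
  | 0 => θ
  | k + 1 => resid θ k - (if 0 ≤ resid θ k then (1 : ℝ) else -1) * aAng k

theorem cordic_angle_decomposition (n : ℕ) (θ : ℝ)
    (hθ : |θ| ≤ ∑ j ∈ Finset.range (n + 1), Real.arctan ((2 : ℝ) ^ (-(j : ℤ)))) :
    ∃ ε : ℕ → ℝ, (∀ j ≤ n, ε j = 1 ∨ ε j = -1) ∧
      |θ - ∑ j ∈ Finset.range (n + 1), ε j * Real.arctan ((2 : ℝ) ^ (-(j : ℤ)))| ≤
        Real.arctan ((2 : ℝ) ^ (-(n : ℤ))) := by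
  have hinv : ∀ k, k ≤ n + 1 → |resid θ k| ≤ aAng n + ∑ j ∈ Finset.Ico k (n + 1), aAng j := by
    intro k
    induction k with
    | zero =>
      intro _
      have heq : ∑ j ∈ Finset.Ico 0 (n + 1), aAng j = ∑ j ∈ Finset.range (n + 1), aAng j := by
        rw [Finset.range_eq_Ico]
      rw [heq]
      have := (aAng_pos n).le
      calc |resid θ 0| = |θ| := rfl
        _ ≤ ∑ j ∈ Finset.range (n + 1), aAng j := hθ
        _ ≤ aAng n + ∑ j ∈ Finset.range (n + 1), aAng j := by linarith
    | succ k ih =>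
      intro hk
      have hkn : k ≤ n := by omega
      have hik := ih (by omega)
      have hsplit : ∑ j ∈ Finset.Ico k (n + 1), aAng j
          = aAng k + ∑ j ∈ Finset.Ico (k + 1) (n + 1), aAng j :=
        Finset.sum_eq_sum_Ico_succ_bot (by omega) _
      have habs : |resid θ (k + 1)| = |(|resid θ k| - aAng k)| := by
        have hstep : resid θ (k + 1)
            = resid θ k - (if 0 ≤ resid θ k then (1 : ℝ) else -1) * aAng k := rfl
        rw [hstep]
        rcases le_or_gt 0 (resid θ k) with h | h
        · rw [if_pos h, one_mul, abs_of_nonneg h]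
        · rw [if_neg (not_le.mpr h), abs_of_neg h, ← abs_neg]
          congr 1; ring
      rw [habs]
      rcases le_or_gt (aAng k) (|resid θ k|) with hc | hc
      · rw [abs_of_nonneg (by linarith)]
        rw [hsplit] at hik
        linarith
      · rw [abs_of_nonpos (by linarith)]
        have hkey := aAng_key (n - k) k
        rw [show k + (n - k) = n by omega] at hkey
        have := abs_nonneg (resid θ k)
        linarith
  refine ⟨fun j => if 0 ≤ resid θ j then (1 : ℝ) else -1, fun j _ => by
    by_cases h : 0 ≤ resid θ j <;> simp [h], ?_⟩
  have hsum : ∀ m, θ - ∑ j ∈ Finset.range m,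
      (if 0 ≤ resid θ j then (1 : ℝ) else -1) * aAng j = resid θ m := by
    intro m
    induction m with
    | zero => simp [resid]
    | succ m ih =>
      have hstep : resid θ (m + 1)
          = resid θ m - (if 0 ≤ resid θ m then (1 : ℝ) else -1) * aAng m := rfl
      rw [Finset.sum_range_succ, hstep, ← ih]
      ring
  have hfin := hinv (n + 1) le_rfl
  simp only [Finset.Ico_self, Finset.sum_empty, add_zero] at hfin
  have hcast : ∑ j ∈ Finset.range (n + 1),
      (if 0 ≤ resid θ j then (1 : ℝ) else -1) * Real.arctan ((2 : ℝ) ^ (-(j : ℤ)))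
      = ∑ j ∈ Finset.range (n + 1), (if 0 ≤ resid θ j then (1 : ℝ) else -1) * aAng j := rfl
  rw [hcast, hsum (n + 1)]
  exact hfin
end

section
/- Let n be a natural number and t a real number with −1 ≤ t ≤ 1. Then there exists a sequence of signs ε_0, ..., ε_n, each equal to 1 or −1, such that |arcsin(t)/2 − ∑_{j=0}^{n} ε_j · arctan(2^{−j})| ≤ 2^{−n}. -/
/-!
If the angles `a j` satisfy `a j ≤ 2 * a (j + 1)` and `|θ| ≤ 2 * a 0`, greedy sign choices
keep the error `θ - ∑_{j ≤ n} ε j * a j` within `a n`: an error `e` with `|e| ≤ 2 * a` is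
reduced to `||e| - a| ≤ a` by subtracting `a` with the sign of `e`. The CORDIC angles
`arctan (2⁻ʲ)` satisfy the doubling condition because `arctan (2x) ≤ 2 arctan x` on `[0, 1)`;
they start at `arctan 1 = π / 4`, so `2 * a 0 = π / 2` dominates `|arcsin t / 2| ≤ π / 4`;
and `a n ≤ 2⁻ⁿ` since `arctan x ≤ x` for `x ≥ 0`.
-/

open Finset Real

theorem exists_sign_abs_sub_le {e a : ℝ} (h : |e| ≤ 2 * a) :
    ∃ s : ℝ, (s = 1 ∨ s = -1) ∧ |e - s * a| ≤ a := by
  rw [abs_le] at h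
  by_cases he : 0 ≤ e
  · exact ⟨1, Or.inl rfl, abs_le.2 ⟨by linarith, by linarith⟩⟩
  · exact ⟨-1, Or.inr rfl, abs_le.2 ⟨by linarith, by linarith⟩⟩

theorem exists_signs_abs_sub_sum_le {a : ℕ → ℝ} (hdouble : ∀ j, a j ≤ 2 * a (j + 1))
    {θ : ℝ} (hθ : |θ| ≤ 2 * a 0) (n : ℕ) :
    ∃ ε : ℕ → ℝ, (∀ j, ε j = 1 ∨ ε j = -1) ∧
      |θ - ∑ j ∈ range (n + 1), ε j * a j| ≤ a n := by
  induction n with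
  | zero =>
    obtain ⟨s, hs, hθs⟩ := exists_sign_abs_sub_le hθ
    exact ⟨fun _ => s, fun _ => hs, by simpa using hθs⟩
  | succ n ih =>
    obtain ⟨ε, hε, herr⟩ := ih
    obtain ⟨s, hs, hes⟩ := exists_sign_abs_sub_le (herr.trans (hdouble n))
    refine ⟨Function.update ε (n + 1) s, fun j => ?_, ?_⟩
    · rcases eq_or_ne j (n + 1) with rfl | hj
      · simpa using hs
      · simpa [hj] using hε j
    · have hprefix : ∑ j ∈ range (n + 1), Function.update ε (n + 1) s j * a j =
          ∑ j ∈ range (n + 1), ε j * a j :=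
        sum_congr rfl fun j hj => by
          rw [Function.update_of_ne (mem_range.1 hj).ne]
      rw [sum_range_succ, hprefix, Function.update_self, ← sub_sub]
      exact hes

theorem Real.arctan_two_mul_le_two_mul_arctan {x : ℝ} (h0 : 0 ≤ x) (h1 : x < 1) :
    arctan (2 * x) ≤ 2 * arctan x := by
  rw [two_mul_arctan (by linarith) h1]
  apply arctan_mono
  have hpos : 0 < 1 - x ^ 2 := by nlinarith
  rw [le_div_iff₀ hpos]
  nlinarith

theorem Real.arctan_le_self {x : ℝ} (hx : 0 ≤ x) : arctan x ≤ x := by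
  simpa only [tan_arctan] using le_tan (arctan_nonneg.2 hx) (arctan_lt_pi_div_two x)

theorem Real.arctan_two_zpow_neg_le_two_mul (j : ℕ) :
    arctan ((2 : ℝ) ^ (-(j : ℤ))) ≤ 2 * arctan ((2 : ℝ) ^ (-((j + 1 : ℕ) : ℤ))) := by
  have hhalf : (2 : ℝ) ^ (-(j : ℤ)) = 2 * (2 : ℝ) ^ (-((j + 1 : ℕ) : ℤ)) := by
    simp only [zpow_neg, zpow_natCast, pow_succ, mul_inv]
    field_simp
  rw [hhalf]
  refine arctan_two_mul_le_two_mul_arctan (by positivity) ?_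
  exact zpow_lt_one_of_neg₀ one_lt_two (by omega)

theorem cordic_arcsin_decomposition_general (n : ℕ) (t : ℝ) :
    ∃ ε : ℕ → ℝ, (∀ j ≤ n, ε j = 1 ∨ ε j = -1) ∧
      |Real.arcsin t / 2 -
          ∑ j ∈ Finset.range (n + 1), ε j * Real.arctan ((2 : ℝ) ^ (-(j : ℤ)))| ≤
        (2 : ℝ) ^ (-(n : ℤ)) := by
  have hθ : |arcsin t / 2| ≤ 2 * arctan ((2 : ℝ) ^ (-((0 : ℕ) : ℤ))) := by
    have := abs_le.2 ⟨neg_pi_div_two_le_arcsin t, arcsin_le_pi_div_two t⟩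
    rw [abs_div, abs_two]
    norm_num [arctan_one]
    linarith [pi_pos]
  obtain ⟨ε, hε, herr⟩ := exists_signs_abs_sub_sum_le
    (a := fun j : ℕ => arctan ((2 : ℝ) ^ (-(j : ℤ)))) arctan_two_zpow_neg_le_two_mul hθ n
  exact ⟨ε, fun j _ => hε j, herr.trans (arctan_le_self (by positivity))⟩

theorem cordic_arcsin_decomposition (n : ℕ) (t : ℝ) (ht0 : -1 ≤ t) (ht1 : t ≤ 1) :
    ∃ ε : ℕ → ℝ, (∀ j ≤ n, ε j = 1 ∨ ε j = -1) ∧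
      |Real.arcsin t / 2 -
          ∑ j ∈ Finset.range (n + 1), ε j * Real.arctan ((2 : ℝ) ^ (-(j : ℤ)))| ≤
        (2 : ℝ) ^ (-(n : ℤ)) :=
  cordic_arcsin_decomposition_general n t
end
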